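/- The map τ is Spin(3)-equivariant: for every 2×2 complex matrix U that is unitary with det U = 1 (i.e. U ∈ SU(2) ≅ Spin(3)) and every φ ∈ ℂ², one has τ(Uφ) = U ∘ τ(φ) ∘ U⁻¹ (equivalently, the matrix of τ(Uφ) equals U · (matrix of τ(φ)) · Uᴴ). -/

import Mathlib

open Matrix Complex

/-- The quadratic map `τ` of the 3-dimensional Seiberg–Witten equations:
`τ(φ)ψ = ⟨ψ, φ⟩φ − ½‖φ‖²ψ`, where `⟨·,·⟩` is the standard Hermitian inner product on
`ℂ²` (conjugate-linear in its second argument, so `⟨ψ, φ⟩ = ⟪φ, ψ⟫` in Mathlib's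
convention). -/
noncomputable def tau (φ ψ : EuclideanSpace ℂ (Fin 2)) : EuclideanSpace ℂ (Fin 2) :=
  (inner ℂ φ ψ : ℂ) • φ - ((‖φ‖ ^ 2 / 2 : ℝ) : ℂ) • ψ

lemma inner_mulVec_left (U : Matrix (Fin 2) (Fin 2) ℂ) (φ ψ : EuclideanSpace ℂ (Fin 2)) :
    (inner ℂ ((WithLp.equiv 2 (Fin 2 → ℂ)).symm (U.mulVec φ)) ψ : ℂ) =
      inner ℂ φ ((WithLp.equiv 2 (Fin 2 → ℂ)).symm (Uᴴ.mulVec ψ)) := by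
  simp only [EuclideanSpace.inner_eq_star_dotProduct, WithLp.equiv_symm_apply]
  rw [Matrix.star_mulVec, dotProduct_comm, ← dotProduct_mulVec, dotProduct_comm]

/-- `Spin(3) ≅ SU(2)` equivariance of `τ`: for every unitary `U` with `det U = 1`
and every `φ, ψ ∈ ℂ²`, `τ(Uφ)ψ = U (τ(φ) (U⁻¹ψ))`, i.e. `τ(Uφ) = U ∘ τ(φ) ∘ U⁻¹`. -/
theorem tau_spin_equivariant (U : Matrix (Fin 2) (Fin 2) ℂ)
    (hU : U ∈ Matrix.unitaryGroup (Fin 2) ℂ) (hdet : U.det = 1)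
    (φ ψ : EuclideanSpace ℂ (Fin 2)) :
    tau ((WithLp.equiv 2 (Fin 2 → ℂ)).symm (U.mulVec φ)) ψ =
      (WithLp.equiv 2 (Fin 2 → ℂ)).symm
        (U.mulVec (tau φ ((WithLp.equiv 2 (Fin 2 → ℂ)).symm (U⁻¹.mulVec ψ)))) := by
  have h1 : Uᴴ * U = 1 := hU.1
  have h2 : U * Uᴴ = 1 := hU.2
  have hinv : U⁻¹ = Uᴴ := Matrix.inv_eq_left_inv h1
  have hnorm : ‖(WithLp.equiv 2 (Fin 2 → ℂ)).symm (U.mulVec φ)‖ = ‖φ‖ := by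
    have := inner_mulVec_left U φ ((WithLp.equiv 2 (Fin 2 → ℂ)).symm (U.mulVec φ))
    rw [show Uᴴ *ᵥ ((WithLp.equiv 2 (Fin 2 → ℂ)).symm (U *ᵥ φ)) = Uᴴ *ᵥ (U *ᵥ φ) from rfl,
      Matrix.mulVec_mulVec, h1, Matrix.one_mulVec] at this
    have h3 : ‖(WithLp.equiv 2 (Fin 2 → ℂ)).symm (U.mulVec φ)‖ ^ 2 = ‖φ‖ ^ 2 := by
      rw [← @inner_self_eq_norm_sq ℂ, ← @inner_self_eq_norm_sq ℂ, this]
      rfl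
    nlinarith [norm_nonneg ((WithLp.equiv 2 (Fin 2 → ℂ)).symm (U.mulVec φ)), norm_nonneg φ, h3]
  rw [hinv]
  unfold tau
  rw [inner_mulVec_left, hnorm]
  have key : ∀ (a b : ℂ) (v w : Fin 2 → ℂ), a • (U *ᵥ v) - b • w = U *ᵥ (a • v - b • (Uᴴ *ᵥ w)) := by
    intro a b v w
    rw [Matrix.mulVec_sub, Matrix.mulVec_smul, Matrix.mulVec_smul,
      Matrix.mulVec_mulVec, h2, Matrix.one_mulVec]
  ext i
  exact congrFun (key _ _ φ ψ) i
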